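/- arXiv:1810.03427 — 3 statements merged into one kernel-verified Lean document; each statement's English description precedes it below -/
import Mathlib

section
/- If α_n ≤ ε for ε ∈ (0,1), then the type-II error exponent satisfies -(1/n) log β_n ≤ (1/(n(1-ε))) D(P_Ĥ|H || P_Ĥ|H̄) + (1/(n(1-ε))) h₂(α_n). -/
/-!
`D(P_Ĥ|H ‖ P_Ĥ|H̄) + h₂(α)` is the cross entropy `-α log (1 - β) - (1 - α) log β` of the
law of `Ĥ` under `H` against its law under `H̄`. Dropping the nonnegative first term and using
`1 - α ≥ 1 - ε` gives `(1 - ε) (-log β) ≤ D + h₂(α)`; divide by `n (1 - ε)`.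
-/

open Finset Real Filter
open scoped Classical BigOperators

noncomputable section

/-- `p` is a probability mass function on the finite type `α`. -/
def IsPMF {α : Type*} [Fintype α] (p : α → ℝ) : Prop :=
  (∀ a, 0 ≤ p a) ∧ ∑ a, p a = 1

/-- Kullback-Leibler divergence between two pmfs on a finite type. -/
def klD {α : Type*} [Fintype α] (p q : α → ℝ) : ℝ :=
  ∑ a, p a * Real.log (p a / q a)

/-- Distribution (pushforward) of the random variable `f` under pmf `μ`. -/
def pdist {Ω α : Type*} [Fintype Ω] (μ : Ω → ℝ) (f : Ω → α) : α → ℝ :=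
  fun a => ∑ ω, if f ω = a then μ ω else 0

/-- Shannon entropy (nats) of the random variable `f` under `μ`. -/
def entOf {Ω α : Type*} [Fintype Ω] [Fintype α] (μ : Ω → ℝ) (f : Ω → α) : ℝ :=
  -∑ a, pdist μ f a * Real.log (pdist μ f a)

/-- Mutual information `I(f; g)` under `μ`. -/
def miOf {Ω α β : Type*} [Fintype Ω] [Fintype α] [Fintype β]
    (μ : Ω → ℝ) (f : Ω → α) (g : Ω → β) : ℝ :=
  entOf μ f + entOf μ g - entOf μ (fun ω => (f ω, g ω))

/-- Conditional mutual information `I(f; g | h)` under `μ`. -/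
def cmiOf {Ω α β γ : Type*} [Fintype Ω] [Fintype α] [Fintype β] [Fintype γ]
    (μ : Ω → ℝ) (f : Ω → α) (g : Ω → β) (h : Ω → γ) : ℝ :=
  entOf μ (fun ω => (f ω, h ω)) + entOf μ (fun ω => (g ω, h ω))
    - entOf μ (fun ω => (f ω, g ω, h ω)) - entOf μ h

/-- Binary entropy function. -/
def binEnt (p : ℝ) : ℝ := -(p * Real.log p) - (1 - p) * Real.log (1 - p)

lemma klD_eq_sum_sub_sum {α : Type*} [Fintype α] (p q : α → ℝ) (hq : ∀ a, q a ≠ 0) :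
    klD p q = ∑ a, p a * Real.log (p a) - ∑ a, p a * Real.log (q a) := by
  rw [klD, ← Finset.sum_sub_distrib]
  refine Finset.sum_congr rfl fun a _ => ?_
  rcases eq_or_ne (p a) 0 with hp | hp
  · simp [hp]
  · rw [Real.log_div hp (hq a), mul_sub]

lemma klD_bool_add_binEnt (p r s : ℝ) (hr : r ≠ 0) (hs : s ≠ 0) :
    klD (fun d : Bool => if d then p else 1 - p) (fun d : Bool => if d then r else s)
        + binEnt p
      = -(p * Real.log r) - (1 - p) * Real.log s := by
  rw [klD_eq_sum_sub_sum _ _ (by simp [hr, hs]), binEnt]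
  simp only [Fintype.sum_bool, if_true, Bool.false_eq_true, if_false]
  ring

lemma one_sub_mul_neg_log_le (ε α β : ℝ) (hα : 0 ≤ α) (hαε : α ≤ ε)
    (hβ : β ∈ Set.Ioo (0:ℝ) 1) :
    (1 - ε) * -Real.log β ≤ -(α * Real.log (1 - β)) - (1 - α) * Real.log β := by
  obtain ⟨hβ0, hβ1⟩ := hβ
  have hlogβ : 0 ≤ -Real.log β := neg_nonneg.2 (Real.log_nonpos hβ0.le hβ1.le)
  have hlog1β : Real.log (1 - β) ≤ 0 := Real.log_nonpos (by linarith) (by linarith)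
  have htypeI : 0 ≤ -(α * Real.log (1 - β)) :=
    neg_nonneg.2 (mul_nonpos_of_nonneg_of_nonpos hα hlog1β)
  nlinarith [mul_le_mul_of_nonneg_right (sub_le_sub_left hαε 1) hlogβ]

theorem stmt_1_general (n : ℕ) (ε αn βn : ℝ)
    (hε : ε ∈ Set.Ioo (0:ℝ) 1) (hα : αn ∈ Set.Ioo (0:ℝ) 1) (hβ : βn ∈ Set.Ioo (0:ℝ) 1)
    (hαε : αn ≤ ε) :
    -(1 / (n : ℝ)) * Real.log βn
      ≤ (1 / ((n : ℝ) * (1 - ε))) *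
          klD (fun d : Bool => if d then αn else 1 - αn)
              (fun d : Bool => if d then 1 - βn else βn)
        + (1 / ((n : ℝ) * (1 - ε))) * binEnt αn := by
  set K := klD (fun d : Bool => if d then αn else 1 - αn)
    (fun d : Bool => if d then 1 - βn else βn)
  have hcross : K + binEnt αn = -(αn * Real.log (1 - βn)) - (1 - αn) * Real.log βn :=
    klD_bool_add_binEnt _ _ _ (by linarith [hβ.2]) hβ.1.ne'
  have hexponent : -Real.log βn ≤ (K + binEnt αn) / (1 - ε) := by
    rw [le_div_iff₀ (sub_pos.2 hε.2), mul_comm, hcross]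
    exact one_sub_mul_neg_log_le ε αn βn hα.1.le hαε hβ
  calc -(1 / (n : ℝ)) * Real.log βn = 1 / (n : ℝ) * -Real.log βn := by ring
    _ ≤ 1 / (n : ℝ) * ((K + binEnt αn) / (1 - ε)) := by gcongr
    _ = 1 / ((n : ℝ) * (1 - ε)) * K + 1 / ((n : ℝ) * (1 - ε)) * binEnt αn := by
      rw [← one_div_mul_one_div]; ring

/-- If the type-I error `αn ≤ ε` with `ε ∈ (0,1)`, then the
type-II error exponent satisfies
`-(1/n) log βn ≤ (1/(n(1-ε))) D(P_Ĥ|H ‖ P_Ĥ|H̄) + (1/(n(1-ε))) h₂(αn)`. -/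
theorem stmt_1 (n : ℕ) (hn : 0 < n) (ε αn βn : ℝ)
    (hε : ε ∈ Set.Ioo (0:ℝ) 1) (hα : αn ∈ Set.Ioo (0:ℝ) 1) (hβ : βn ∈ Set.Ioo (0:ℝ) 1)
    (hαε : αn ≤ ε) :
    -(1 / (n : ℝ)) * Real.log βn
      ≤ (1 / ((n : ℝ) * (1 - ε))) *
          klD (fun d : Bool => if d then αn else 1 - αn)
              (fun d : Bool => if d then 1 - βn else βn)
        + (1 / ((n : ℝ) * (1 - ε))) * binEnt αn :=
  stmt_1_general n ε αn βn hε hα hβ hαε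
end
end

section
/- Let (X^n, Y^n) be i.i.d. pairs and M = φ(X^n) a function of X^n. Then I(Y^n; M) ≤ Σ_{k=1}^n I(Y_k; U_k) where U_k = (M, X^{k-1}), and moreover the Markov chain Y^{k-1} — (M, X^{k-1}) — Y_k holds for each k. -/
/-!
The joint law of `(Xⁿ, Yⁿ)` is `∏_j P(x_j, y_j)`. On the event `X^{k-1} = x` the factors with
`j < k` depend only on `x` and `Y^{k-1}`, so the law of `(Y^{k-1}, Y_k, U_k)` factors as
`F(y^{k-1}, u) · G(y_k, u)`, which forces `I(Y^{k-1}; Y_k | U_k) = 0`. By the chain rule,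
`I(Yⁿ; M) = ∑_k I(Y_k; M | Y^{k-1})`, and this Markov chain bounds each term:
`I(Y_k; M | Y^{k-1}) ≤ I(Y_k; U_k, Y^{k-1}) = I(Y_k; U_k)`.
-/

open Finset Real Filter
open scoped Classical BigOperators

noncomputable section

section Distribution

variable {Ω α β : Type*} [Fintype Ω] {μ : Ω → ℝ}

lemma pdist_nonneg (hμ : ∀ ω, 0 ≤ μ ω) (f : Ω → α) (a : α) : 0 ≤ pdist μ f a :=
  sum_nonneg fun ω _ => by split_ifs <;> simp [hμ ω]

lemma pdist_comp [Fintype α] (μ : Ω → ℝ) (f : Ω → α) (u : α → β) (b : β) :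
    pdist μ (fun ω => u (f ω)) b = ∑ a, if u a = b then pdist μ f a else 0 := by
  have hsplit : ∀ ω, (if u (f ω) = b then μ ω else 0)
      = ∑ a, if f ω = a then (if u a = b then μ ω else 0) else 0 := by simp
  simp only [pdist, hsplit]
  rw [sum_comm]
  refine sum_congr rfl fun a _ => ?_
  split_ifs <;> simp_all

lemma pdist_le_pdist_comp (hμ : ∀ ω, 0 ≤ μ ω) (f : Ω → α) (u : α → β) (a : α) :
    pdist μ f a ≤ pdist μ (fun ω => u (f ω)) (u a) :=
  sum_le_sum fun ω _ => by
    by_cases h : f ω = a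
    · simp [h]
    · split_ifs <;> simp [hμ ω]

lemma sum_pdist_pair_left [Fintype α] (μ : Ω → ℝ) (f : Ω → α) (g : Ω → β) (b : β) :
    ∑ a, pdist μ (fun ω => (f ω, g ω)) (a, b) = pdist μ g b := by
  simp only [pdist]
  rw [sum_comm]
  simp [Prod.ext_iff, ite_and]

lemma sum_pdist [Fintype α] (μ : Ω → ℝ) (f : Ω → α) : ∑ a, pdist μ f a = ∑ ω, μ ω := by
  simp only [pdist]
  rw [sum_comm]
  simp

end Distribution

section Entropy

variable {Ω α β γ δ : Type*} [Fintype Ω] [Fintype α] [Fintype β] [Fintype γ] [Fintype δ]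
  {μ : Ω → ℝ}

lemma entOf_comp_eq_sum (μ : Ω → ℝ) (f : Ω → α) (u : α → β) :
    entOf μ (fun ω => u (f ω))
      = -∑ a, pdist μ f a * log (pdist μ (fun ω => u (f ω)) (u a)) := by
  simp only [entOf, neg_inj]
  simp_rw [pdist_comp μ f u, sum_mul, ite_mul, zero_mul]
  rw [sum_comm]
  simp

lemma entOf_comp_of_injOn (f : Ω → α) {u : α → β} (hu : Set.InjOn u (Set.range f)) :
    entOf μ (fun ω => u (f ω)) = entOf μ f := by
  rw [entOf_comp_eq_sum, entOf]
  congr 1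
  refine sum_congr rfl fun a _ => ?_
  by_cases ha : a ∈ Set.range f
  · congr 2
    refine sum_congr rfl fun ω _ => ?_
    simp only [(hu.eq_iff (Set.mem_range_self ω) ha)]
  · have : pdist μ f a = 0 :=
      sum_eq_zero fun ω _ => if_neg fun h => ha ⟨ω, h⟩
    simp [this]

lemma entOf_of_comp_eq_of_comp {f : Ω → α} {g : Ω → β} (u : α → β) (v : β → α)
    (hu : ∀ ω, u (f ω) = g ω) (hv : ∀ ω, v (g ω) = f ω) : entOf μ f = entOf μ g := by
  have hg : g = fun ω => u (f ω) := funext fun ω => (hu ω).symm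
  rw [hg, entOf_comp_of_injOn f]
  rintro _ ⟨ω, rfl⟩ _ ⟨ω', rfl⟩ h
  rw [← hv ω, ← hv ω', ← hu ω, ← hu ω', h]

lemma entOf_of_subsingleton [Subsingleton α] (hμ : ∑ ω, μ ω = 1) (f : Ω → α) :
    entOf μ f = 0 := by
  have : ∀ a, pdist μ f a = 1 := fun a => by simp [pdist, Subsingleton.elim (f _) a, hμ]
  simp [entOf, this]

end Entropy

section Divergence

variable {α : Type*} [Fintype α] {p q : α → ℝ}

lemma klD_nonneg (hp : ∀ a, 0 ≤ p a) (hq : ∀ a, 0 ≤ q a) (hpq : ∀ a, 0 < p a → 0 < q a)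
    (hsum : ∑ a, q a ≤ ∑ a, p a) : 0 ≤ klD p q := by
  have hterm : ∀ a, p a - q a ≤ p a * log (p a / q a) := by
    intro a
    rcases (hp a).eq_or_lt with h | h
    · simp [← h, hq a]
    · have hlog := mul_le_mul_of_nonneg_left
        (log_le_sub_one_of_pos (div_pos (hpq a h) h)) h.le
      rw [mul_sub, mul_div_cancel₀ _ h.ne', mul_one, ← neg_neg (log (q a / p a)), ← log_inv,
        inv_div] at hlog
      linarith
  calc 0 ≤ ∑ a, (p a - q a) := by rw [sum_sub_distrib]; linarith
    _ ≤ klD p q := sum_le_sum fun a _ => hterm a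

lemma klD_eq_zero (h : ∀ a, p a ≠ 0 → q a = p a) : klD p q = 0 :=
  sum_eq_zero fun a _ => by
    by_cases hp : p a = 0
    · simp [hp]
    · rw [h a hp, div_self hp, log_one, mul_zero]

end Divergence

section ConditionalMutualInformation

variable {Ω α β γ : Type*} [Fintype Ω] {μ : Ω → ℝ}

def condIndepLaw (μ : Ω → ℝ) (f : Ω → α) (g : Ω → β) (h : Ω → γ) : α × β × γ → ℝ :=
  fun t => pdist μ (fun ω => (f ω, h ω)) (t.1, t.2.2) * pdist μ (fun ω => (g ω, h ω)) t.2
    / pdist μ h t.2.2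

lemma sum_pdist_triple_middle [Fintype β] (μ : Ω → ℝ) (f : Ω → α) (g : Ω → β) (h : Ω → γ)
    (a : α) (c : γ) :
    ∑ b, pdist μ (fun ω => (f ω, g ω, h ω)) (a, b, c) = pdist μ (fun ω => (f ω, h ω)) (a, c) := by
  simp only [pdist]
  rw [sum_comm]
  simp [Prod.ext_iff, ite_and]

lemma pdist_marginals_pos (hμ : ∀ ω, 0 ≤ μ ω) {f : Ω → α} {g : Ω → β} {h : Ω → γ}
    {a : α} {b : β} {c : γ} (hpos : 0 < pdist μ (fun ω => (f ω, g ω, h ω)) (a, b, c)) :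
    0 < pdist μ (fun ω => (f ω, h ω)) (a, c) ∧ 0 < pdist μ (fun ω => (g ω, h ω)) (b, c)
      ∧ 0 < pdist μ h c :=
  ⟨hpos.trans_le (pdist_le_pdist_comp hμ _ (fun t : α × β × γ => (t.1, t.2.2)) _),
    hpos.trans_le (pdist_le_pdist_comp hμ _ Prod.snd _),
    hpos.trans_le (pdist_le_pdist_comp hμ _ (fun t : α × β × γ => t.2.2) _)⟩

variable [Fintype α] [Fintype β] [Fintype γ]

lemma sum_condIndepLaw (μ : Ω → ℝ) (f : Ω → α) (g : Ω → β) (h : Ω → γ) :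
    ∑ t, condIndepLaw μ f g h t = ∑ ω, μ ω := by
  have hc : ∀ c, pdist μ h c = ∑ a, ∑ b, pdist μ (fun ω => (f ω, h ω)) (a, c)
      * pdist μ (fun ω => (g ω, h ω)) (b, c) / pdist μ h c := by
    intro c
    simp only [← sum_div, ← sum_mul_sum, sum_pdist_pair_left]
    rcases eq_or_ne (pdist μ h c) 0 with h0 | h0
    · simp [h0]
    · field_simp
  rw [← sum_pdist μ h, sum_congr rfl fun c _ => hc c]
  simp only [condIndepLaw, Fintype.sum_prod_type]
  exact (sum_congr rfl fun a _ => sum_comm).trans sum_comm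

lemma cmiOf_eq_klD (hμ : ∀ ω, 0 ≤ μ ω) (f : Ω → α) (g : Ω → β) (h : Ω → γ) :
    cmiOf μ f g h = klD (pdist μ (fun ω => (f ω, g ω, h ω))) (condIndepLaw μ f g h) := by
  have hAC : entOf μ (fun ω => (f ω, h ω)) = -∑ t, pdist μ (fun ω => (f ω, g ω, h ω)) t
      * log (pdist μ (fun ω => (f ω, h ω)) (t.1, t.2.2)) :=
    entOf_comp_eq_sum μ (fun ω => (f ω, g ω, h ω)) (fun t : α × β × γ => (t.1, t.2.2))
  have hBC : entOf μ (fun ω => (g ω, h ω)) = -∑ t, pdist μ (fun ω => (f ω, g ω, h ω)) t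
      * log (pdist μ (fun ω => (g ω, h ω)) t.2) :=
    entOf_comp_eq_sum μ (fun ω => (f ω, g ω, h ω)) Prod.snd
  have hC : entOf μ h = -∑ t, pdist μ (fun ω => (f ω, g ω, h ω)) t
      * log (pdist μ h t.2.2) :=
    entOf_comp_eq_sum μ (fun ω => (f ω, g ω, h ω)) (fun t : α × β × γ => t.2.2)
  calc cmiOf μ f g h
      = ∑ t, pdist μ (fun ω => (f ω, g ω, h ω)) t
          * (log (pdist μ (fun ω => (f ω, g ω, h ω)) t) + log (pdist μ h t.2.2)
            - log (pdist μ (fun ω => (f ω, h ω)) (t.1, t.2.2))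
            - log (pdist μ (fun ω => (g ω, h ω)) t.2)) := by
        rw [cmiOf, hAC, hBC, hC, entOf]
        simp only [mul_add, mul_sub, sum_add_distrib, sum_sub_distrib]
        ring
    _ = klD (pdist μ (fun ω => (f ω, g ω, h ω))) (condIndepLaw μ f g h) := by
        refine sum_congr rfl fun t _ => ?_
        rcases (pdist_nonneg hμ (fun ω => (f ω, g ω, h ω)) t).eq_or_lt with h0 | hpos
        · simp [← h0]
        obtain ⟨hAC, hBC, hC⟩ := pdist_marginals_pos hμ hpos
        rw [condIndepLaw, log_div hpos.ne' (by positivity), log_div (by positivity) hC.ne',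
          log_mul hAC.ne' hBC.ne']
        ring

lemma cmiOf_nonneg (hμ : ∀ ω, 0 ≤ μ ω) (f : Ω → α) (g : Ω → β) (h : Ω → γ) :
    0 ≤ cmiOf μ f g h := by
  rw [cmiOf_eq_klD hμ]
  refine klD_nonneg (pdist_nonneg hμ _) (fun t => ?_) (fun t hpos => ?_) ?_
  · exact div_nonneg (mul_nonneg (pdist_nonneg hμ _ _) (pdist_nonneg hμ _ _))
      (pdist_nonneg hμ _ _)
  · obtain ⟨hAC, hBC, hC⟩ := pdist_marginals_pos hμ hpos
    exact div_pos (mul_pos hAC hBC) hC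
  · rw [sum_condIndepLaw, sum_pdist]

lemma cmiOf_eq_zero_of_pdist_eq_mul (hμ : ∀ ω, 0 ≤ μ ω) {f : Ω → α} {g : Ω → β} {h : Ω → γ}
    (F : α → γ → ℝ) (G : β → γ → ℝ)
    (hfac : ∀ a b c, pdist μ (fun ω => (f ω, g ω, h ω)) (a, b, c) = F a c * G b c) :
    cmiOf μ f g h = 0 := by
  have hAC : ∀ a c, pdist μ (fun ω => (f ω, h ω)) (a, c) = F a c * ∑ b, G b c := fun a c => by
    rw [← sum_pdist_triple_middle μ f g h, mul_sum]
    simp only [hfac]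
  have hBC : ∀ b c, pdist μ (fun ω => (g ω, h ω)) (b, c) = G b c * ∑ a, F a c := fun b c => by
    rw [← sum_pdist_pair_left μ f (fun ω => (g ω, h ω)), mul_sum]
    simp only [hfac, mul_comm]
  have hC : ∀ c, pdist μ h c = (∑ a, F a c) * ∑ b, G b c := fun c => by
    rw [← sum_pdist_pair_left μ g h]
    simp only [hBC, ← sum_mul]
    ring
  rw [cmiOf_eq_klD hμ]
  refine klD_eq_zero fun ⟨a, b, c⟩ hP => ?_
  have hCpos := (pdist_marginals_pos hμ ((pdist_nonneg hμ _ _).lt_of_ne' hP)).2.2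
  rw [hC] at hCpos
  simp only [condIndepLaw, hAC, hBC, hC, hfac]
  obtain ⟨hF, hG⟩ := mul_ne_zero_iff.mp hCpos.ne'
  field_simp

end ConditionalMutualInformation

section MutualInformation

variable {Ω α β γ δ : Type*} [Fintype Ω] [Fintype α] [Fintype β] [Fintype γ] [Fintype δ]
  {μ : Ω → ℝ}

lemma miOf_eq_cmiOf_unit (hμ : ∑ ω, μ ω = 1) (f : Ω → α) (g : Ω → β) :
    miOf μ f g = cmiOf μ f g (fun _ => ()) := by
  have hf : entOf μ (fun ω => (f ω, ())) = entOf μ f :=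
    entOf_of_comp_eq_of_comp Prod.fst (fun a => (a, ())) (fun _ => rfl) (fun _ => rfl)
  have hg : entOf μ (fun ω => (g ω, ())) = entOf μ g :=
    entOf_of_comp_eq_of_comp Prod.fst (fun b => (b, ())) (fun _ => rfl) (fun _ => rfl)
  have hfg : entOf μ (fun ω => (f ω, g ω, ())) = entOf μ (fun ω => (f ω, g ω)) :=
    entOf_of_comp_eq_of_comp (fun t => (t.1, t.2.1)) (fun p => (p.1, p.2, ()))
      (fun _ => rfl) (fun _ => rfl)
  rw [miOf, cmiOf, hf, hg, hfg, entOf_of_subsingleton hμ (fun _ : Ω => ())]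
  ring

lemma miOf_nonneg (hμ₀ : ∀ ω, 0 ≤ μ ω) (hμ : ∑ ω, μ ω = 1) (f : Ω → α) (g : Ω → β) :
    0 ≤ miOf μ f g := by
  rw [miOf_eq_cmiOf_unit hμ]
  exact cmiOf_nonneg hμ₀ f g _

lemma miOf_of_unique [Unique α] (hμ : ∑ ω, μ ω = 1) (f : Ω → α) (g : Ω → β) :
    miOf μ f g = 0 := by
  have hfg : entOf μ (fun ω => (f ω, g ω)) = entOf μ g :=
    entOf_of_comp_eq_of_comp Prod.snd (fun b => (default, b)) (fun _ => rfl)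
      (fun ω => Prod.ext (Subsingleton.elim _ _) rfl)
  rw [miOf, hfg, entOf_of_subsingleton hμ]
  ring

lemma miOf_congr_left {f : Ω → α} {f' : Ω → β} (u : α → β) (v : β → α)
    (hu : ∀ ω, u (f ω) = f' ω) (hv : ∀ ω, v (f' ω) = f ω) (g : Ω → γ) :
    miOf μ f g = miOf μ f' g := by
  rw [miOf, miOf, entOf_of_comp_eq_of_comp u v hu hv,
    entOf_of_comp_eq_of_comp (f := fun ω => (f ω, g ω)) (g := fun ω => (f' ω, g ω))
      (fun p => (u p.1, p.2)) (fun p => (v p.1, p.2)) (fun ω => by rw [hu]) (fun ω => by rw [hv])]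

lemma miOf_pair_left (f : Ω → α) (g : Ω → β) (h : Ω → γ) :
    miOf μ (fun ω => (f ω, g ω)) h = miOf μ g h + cmiOf μ f h g := by
  have hgh : entOf μ (fun ω => (g ω, h ω)) = entOf μ (fun ω => (h ω, g ω)) :=
    entOf_of_comp_eq_of_comp Prod.swap Prod.swap (fun _ => rfl) (fun _ => rfl)
  have hfgh : entOf μ (fun ω => ((f ω, g ω), h ω)) = entOf μ (fun ω => (f ω, h ω, g ω)) :=
    entOf_of_comp_eq_of_comp (fun t => (t.1.1, t.2, t.1.2)) (fun t => ((t.1, t.2.2), t.2.1))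
      (fun _ => rfl) (fun _ => rfl)
  rw [miOf, miOf, cmiOf, hgh, hfgh]
  ring

theorem miOf_chain_rule (hμ : ∑ ω, μ ω = 1) : ∀ {n : ℕ} (Y : Fin n → Ω → α) (B : Ω → β),
    miOf μ (fun ω k => Y k ω) B
      = ∑ k : Fin n, cmiOf μ (Y k) B (fun ω (j : Fin k) => Y ⟨j, j.2.trans k.2⟩ ω)
  | 0, _, B => by rw [miOf_of_unique hμ, Fin.sum_univ_zero]
  | n + 1, Y, B => by
    rw [Fin.sum_univ_castSucc,
      miOf_congr_left (fun q => (q (Fin.last n), Fin.init q)) (fun p => Fin.snoc p.2 p.1)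
        (f' := fun ω => (Y (Fin.last n) ω, fun i : Fin n => Y i.castSucc ω)) (fun _ => rfl)
        (fun ω => Fin.snoc_init_self (fun k => Y k ω)),
      miOf_pair_left]
    congr 1
    exact miOf_chain_rule hμ (fun i => Y i.castSucc) B

lemma cmiOf_le_miOf_of_cmiOf_eq_zero (hμ₀ : ∀ ω, 0 ≤ μ ω) (hμ : ∑ ω, μ ω = 1)
    (A : Ω → α) (B : Ω → β) (C : Ω → γ) (D : Ω → δ)
    (hmarkov : cmiOf μ C A (fun ω => (B ω, D ω)) = 0) :
    cmiOf μ A B C ≤ miOf μ A (fun ω => (B ω, D ω)) := by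
  have h₁ := cmiOf_nonneg hμ₀ A D (fun ω => (B ω, C ω))
  have h₂ := miOf_nonneg hμ₀ hμ A C
  have e₁ : entOf μ (fun ω => (D ω, B ω, C ω)) = entOf μ (fun ω => (C ω, B ω, D ω)) :=
    entOf_of_comp_eq_of_comp (fun t => (t.2.2, t.2.1, t.1)) (fun t => (t.2.2, t.2.1, t.1))
      (fun _ => rfl) (fun _ => rfl)
  have e₂ : entOf μ (fun ω => (A ω, D ω, B ω, C ω)) = entOf μ (fun ω => (C ω, A ω, B ω, D ω)) :=
    entOf_of_comp_eq_of_comp (fun t => (t.2.2.2, t.1, t.2.2.1, t.2.1))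
      (fun t => (t.2.1, t.2.2.2, t.2.2.1, t.1)) (fun _ => rfl) (fun _ => rfl)
  -- `I(A; B | C) ≤ I(A; B, D | C) + I(A; C) = I(A; B, C, D) = I(A; B, D) + I(A; C | B, D)`
  simp only [cmiOf, miOf] at *
  linarith

end MutualInformation

lemma sum_ite_forall_prod {ι κ : Type*} [Fintype ι] [Fintype κ] (T : ι → κ → Prop)
    (r : ι → κ → ℝ) :
    ∑ y : ι → κ, (if ∀ i, T i (y i) then ∏ i, r i (y i) else 0)
      = ∏ i, ∑ y, if T i y then r i y else 0 := by
  rw [Fintype.prod_sum]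
  exact sum_congr rfl fun y _ => Fintype.prod_ite_zero.symm

lemma fin_prefix_eq_iff {β : Type*} {n : ℕ} {k : Fin n} (v : Fin n → β) (a : Fin k → β) :
    (fun j : Fin k => v ⟨j, j.2.trans k.2⟩) = a ↔ ∀ j : Fin n, ∀ h : j.1 < k, v j = a ⟨j, h⟩ :=
  ⟨fun h j hj => by subst h; rfl, fun h => funext fun j => h _ j.2⟩

section Memoryless

variable {Ω 𝒳 𝒴 : Type*} [Fintype Ω] [Fintype 𝒳] [Fintype 𝒴] {μ : Ω → ℝ} {n : ℕ}
  {X : Fin n → Ω → 𝒳} {Y : Fin n → Ω → 𝒴} {PXY : 𝒳 × 𝒴 → ℝ}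

lemma pdist_comp_eq_sum_prod {β : Type*}
    (hiid : ∀ (xs : Fin n → 𝒳) (ys : Fin n → 𝒴),
      pdist μ (fun ω => (fun k => X k ω, fun k => Y k ω)) (xs, ys) = ∏ k, PXY (xs k, ys k))
    (u : (Fin n → 𝒳) × (Fin n → 𝒴) → β) (z : β) :
    pdist μ (fun ω => u (fun k => X k ω, fun k => Y k ω)) z
      = ∑ xs, ∑ ys, if u (xs, ys) = z then ∏ k, PXY (xs k, ys k) else 0 := by
  rw [pdist_comp, Fintype.sum_prod_type]
  simp only [hiid]

lemma exists_pdist_prefix_eq_mul {M : Type*}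
    (hiid : ∀ (xs : Fin n → 𝒳) (ys : Fin n → 𝒴),
      pdist μ (fun ω => (fun k => X k ω, fun k => Y k ω)) (xs, ys) = ∏ k, PXY (xs k, ys k))
    (φ : (Fin n → 𝒳) → M) (k : Fin n) :
    ∃ (F : (Fin k → 𝒴) → M × (Fin k → 𝒳) → ℝ) (G : 𝒴 → M × (Fin k → 𝒳) → ℝ), ∀ a b c,
      pdist μ (fun ω => ((fun j : Fin k => Y ⟨j, j.2.trans k.2⟩ ω), Y k ω,
        (φ (fun j => X j ω), fun j : Fin k => X ⟨j, j.2.trans k.2⟩ ω))) (a, b, c)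
        = F a c * G b c := by
  refine ⟨fun a c => ∏ j : Fin n, if h : j.1 < k.1 then PXY (c.2 ⟨j, h⟩, a ⟨j, h⟩) else 1,
    fun b c => ∑ xs, if φ xs = c.1 ∧ (fun j : Fin k => xs ⟨j, j.2.trans k.2⟩) = c.2 then
      ∏ j : Fin n, (if j.1 < k.1 then 1 else ∑ y, if j = k → y = b then PXY (xs j, y) else 0)
      else 0, ?_⟩
  rintro a b ⟨m, x⟩
  rw [pdist_comp_eq_sum_prod hiid (fun w => ((fun j : Fin k => w.2 ⟨j, j.2.trans k.2⟩), w.2 k,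
    (φ w.1, fun j : Fin k => w.1 ⟨j, j.2.trans k.2⟩))), mul_sum]
  refine sum_congr rfl fun xs _ => ?_
  dsimp only
  by_cases hS : φ xs = m ∧ (fun j : Fin k => xs ⟨j, j.2.trans k.2⟩) = x
  · obtain ⟨rfl, rfl⟩ := hS
    have hT : ∀ ys : Fin n → 𝒴,
        ((fun j : Fin k => ys ⟨j, j.2.trans k.2⟩), ys k,
          (φ xs, fun j : Fin k => xs ⟨j, j.2.trans k.2⟩))
          = (a, b, (φ xs, fun j : Fin k => xs ⟨j, j.2.trans k.2⟩))
        ↔ ∀ j, (∀ h : j.1 < k.1, ys j = a ⟨j, h⟩) ∧ (j = k → ys j = b) := fun ys => by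
      simp only [Prod.mk.injEq, and_true, forall_and, forall_eq, fin_prefix_eq_iff]
    simp only [hT, and_self, if_true]
    rw [← prod_mul_distrib]
    convert sum_ite_forall_prod
      (fun (j : Fin n) y => (∀ h : j.1 < k.1, y = a ⟨j, h⟩) ∧ (j = k → y = b))
      (fun j y => PXY (xs j, y)) using 1
    · congr! 2
    refine prod_congr rfl fun j _ => ?_
    by_cases hj : j.1 < k.1
    · simp [hj, Fin.ne_of_lt hj]
    · simp [hj]
  · rw [if_neg hS, mul_zero]
    refine sum_eq_zero fun ys _ => if_neg fun h => hS ?_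
    simp only [Prod.mk.injEq] at h
    exact ⟨h.2.2.1, h.2.2.2⟩

end Memoryless

theorem stmt_2_general {Ω 𝒳 𝒴 M : Type*} [Fintype Ω] [Fintype 𝒳] [Fintype 𝒴] [Fintype M]
    (μ : Ω → ℝ) (hμ : IsPMF μ) (n : ℕ)
    (X : Fin n → Ω → 𝒳) (Y : Fin n → Ω → 𝒴) (PXY : 𝒳 × 𝒴 → ℝ)
    (hiid : ∀ (xs : Fin n → 𝒳) (ys : Fin n → 𝒴),
      pdist μ (fun ω => (fun k => X k ω, fun k => Y k ω)) (xs, ys) = ∏ k, PXY (xs k, ys k))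
    (φ : (Fin n → 𝒳) → M) :
    miOf μ (fun ω (k : Fin n) => Y k ω) (fun ω => φ (fun k => X k ω))
        ≤ ∑ k : Fin n,
            miOf μ (Y k)
              (fun ω => (φ (fun j => X j ω),
                fun j : Fin k.1 => X ⟨j.1, j.2.trans k.2⟩ ω))
      ∧ ∀ k : Fin n,
          cmiOf μ (fun ω (j : Fin k.1) => Y ⟨j.1, j.2.trans k.2⟩ ω) (Y k)
            (fun ω => (φ (fun j => X j ω),
              fun j : Fin k.1 => X ⟨j.1, j.2.trans k.2⟩ ω)) = 0 := by
  obtain ⟨hμ₀, hμ⟩ := hμ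
  have markov : ∀ k : Fin n,
      cmiOf μ (fun ω (j : Fin k.1) => Y ⟨j.1, j.2.trans k.2⟩ ω) (Y k)
        (fun ω => (φ (fun j => X j ω), fun j : Fin k.1 => X ⟨j.1, j.2.trans k.2⟩ ω)) = 0 :=
    fun k =>
      let ⟨F, G, hfac⟩ := exists_pdist_prefix_eq_mul hiid φ k
      cmiOf_eq_zero_of_pdist_eq_mul hμ₀ F G hfac
  refine ⟨?_, markov⟩
  rw [miOf_chain_rule hμ]
  exact sum_le_sum fun k _ => cmiOf_le_miOf_of_cmiOf_eq_zero hμ₀ hμ _ _ _ _ (markov k)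

/-- For i.i.d. pairs `(X_k, Y_k)` and a message `M = φ(Xⁿ)`,
`I(Yⁿ; M) ≤ ∑ₖ I(Y_k; U_k)` with `U_k = (M, X^{k-1})`, and the Markov chain
`Y^{k-1} — (M, X^{k-1}) — Y_k` holds (stated as vanishing conditional mutual
information). -/
theorem stmt_2 {Ω 𝒳 𝒴 M : Type*} [Fintype Ω] [Fintype 𝒳] [Fintype 𝒴] [Fintype M]
    (μ : Ω → ℝ) (hμ : IsPMF μ) (n : ℕ)
    (X : Fin n → Ω → 𝒳) (Y : Fin n → Ω → 𝒴) (PXY : 𝒳 × 𝒴 → ℝ) (hPXY : IsPMF PXY)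
    (hiid : ∀ (xs : Fin n → 𝒳) (ys : Fin n → 𝒴),
      pdist μ (fun ω => (fun k => X k ω, fun k => Y k ω)) (xs, ys) = ∏ k, PXY (xs k, ys k))
    (φ : (Fin n → 𝒳) → M) :
    miOf μ (fun ω (k : Fin n) => Y k ω) (fun ω => φ (fun k => X k ω))
        ≤ ∑ k : Fin n,
            miOf μ (Y k)
              (fun ω => (φ (fun j => X j ω),
                fun j : Fin k.1 => X ⟨j.1, j.2.trans k.2⟩ ω))
      ∧ ∀ k : Fin n,
          cmiOf μ (fun ω (j : Fin k.1) => Y ⟨j.1, j.2.trans k.2⟩ ω) (Y k)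
            (fun ω => (φ (fun j => X j ω),
              fun j : Fin k.1 => X ⟨j.1, j.2.trans k.2⟩ ω)) = 0 :=
  stmt_2_general μ hμ n X Y PXY hiid φ
end
end

section
/- (Optimal exponents with full rates.) If R₁ ≥ H(X) and R₂ ≥ H(Y₁|X), then the optimal error-exponent region is exactly {(θ₁,θ₂) : 0 ≤ θ₁ ≤ D(P_{XY₁} || P̄_{XY₁}), 0 ≤ θ₂ ≤ D(P_{XY₁Y₂} || P̄_{XY₁Y₂})}. In particular the converse part: any achievable θ₁ satisfies θ₁ ≤ D(P_{XY₁}||P̄_{XY₁}) even when Detector 1 observes (X^n, Y₁^n) directly (Stein's lemma bound), and similarly θ₂ ≤ D(P_{XY₁Y₂}||P̄_{XY₁Y₂}). -/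
open Finset Real Filter
open scoped Classical BigOperators

noncomputable section

/-- A coding/testing scheme at blocklength `n`: the sensor message `φ₁`, the
cooperation message `φ₂`, and the two binary decisions (`true` = declare the
alternative hypothesis `H̄`, `false` = declare the null hypothesis `H`). -/
structure Scheme (𝒳 𝒴₁ 𝒴₂ : Type*) (n : ℕ) where
  m₁ : ℕ
  m₂ : ℕ
  φ₁ : (Fin n → 𝒳) → Fin m₁
  φ₂ : Fin m₁ × (Fin n → 𝒴₁) → Fin m₂
  ψ₁ : Fin m₁ × (Fin n → 𝒴₁) → Bool
  ψ₂ : Fin m₁ × Fin m₂ × (Fin n → 𝒴₂) → Bool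

variable {𝒳 𝒴₁ 𝒴₂ : Type*} [Fintype 𝒳] [Fintype 𝒴₁] [Fintype 𝒴₂]

/-- Probability of an event under the `n`-fold i.i.d. extension of the pmf `p`. -/
def prn (p : 𝒳 × 𝒴₁ × 𝒴₂ → ℝ) (n : ℕ)
    (E : (Fin n → 𝒳) → (Fin n → 𝒴₁) → (Fin n → 𝒴₂) → Prop) : ℝ :=
  ∑ x : Fin n → 𝒳, ∑ y1 : Fin n → 𝒴₁, ∑ y2 : Fin n → 𝒴₂,
    if E x y1 y2 then ∏ t, p (x t, y1 t, y2 t) else 0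

/-- Decision of Detector 1. -/
def dec1 {n : ℕ} (S : Scheme 𝒳 𝒴₁ 𝒴₂ n) (x : Fin n → 𝒳) (y1 : Fin n → 𝒴₁) : Bool :=
  S.ψ₁ (S.φ₁ x, y1)

/-- Decision of Detector 2. -/
def dec2 {n : ℕ} (S : Scheme 𝒳 𝒴₁ 𝒴₂ n) (x : Fin n → 𝒳) (y1 : Fin n → 𝒴₁)
    (y2 : Fin n → 𝒴₂) : Bool :=
  S.ψ₂ (S.φ₁ x, S.φ₂ (S.φ₁ x, y1), y2)

/-- Type-I error probability of Detector 1 (declaring `H̄` under `H ∼ P`). -/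
def α1 (P : 𝒳 × 𝒴₁ × 𝒴₂ → ℝ) {n : ℕ} (S : Scheme 𝒳 𝒴₁ 𝒴₂ n) : ℝ :=
  prn P n (fun x y1 _ => dec1 S x y1 = true)

/-- Type-II error probability of Detector 1 (declaring `H` under `H̄ ∼ P̄`). -/
def β1 (Pb : 𝒳 × 𝒴₁ × 𝒴₂ → ℝ) {n : ℕ} (S : Scheme 𝒳 𝒴₁ 𝒴₂ n) : ℝ :=
  prn Pb n (fun x y1 _ => dec1 S x y1 = false)

/-- Type-I error probability of Detector 2. -/
def α2 (P : 𝒳 × 𝒴₁ × 𝒴₂ → ℝ) {n : ℕ} (S : Scheme 𝒳 𝒴₁ 𝒴₂ n) : ℝ :=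
  prn P n (fun x y1 y2 => dec2 S x y1 y2 = true)

/-- Type-II error probability of Detector 2. -/
def β2 (Pb : 𝒳 × 𝒴₁ × 𝒴₂ → ℝ) {n : ℕ} (S : Scheme 𝒳 𝒴₁ 𝒴₂ n) : ℝ :=
  prn Pb n (fun x y1 y2 => dec2 S x y1 y2 = false)

/-- Achievability of an error-exponent pair `(θ₁, θ₂)` at rates `(R₁, R₂)` and
type-I error constraints `(ε₁, ε₂)`, for null hypothesis `P` and alternative
hypothesis `P̄`. -/
def Achievable (P Pb : 𝒳 × 𝒴₁ × 𝒴₂ → ℝ) (R₁ R₂ ε₁ ε₂ θ₁ θ₂ : ℝ) : Prop :=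
  ∃ S : ∀ n : ℕ, Scheme 𝒳 𝒴₁ 𝒴₂ n,
    Filter.limsup (fun n : ℕ => α1 P (S n)) Filter.atTop ≤ ε₁ ∧
    Filter.limsup (fun n : ℕ => α2 P (S n)) Filter.atTop ≤ ε₂ ∧
    θ₁ ≤ Filter.liminf (fun n : ℕ => -(1 / (n : ℝ)) * Real.log (β1 Pb (S n))) Filter.atTop ∧
    θ₂ ≤ Filter.liminf (fun n : ℕ => -(1 / (n : ℝ)) * Real.log (β2 Pb (S n))) Filter.atTop ∧
    Filter.limsup (fun n : ℕ => (1 / (n : ℝ)) * Real.log ((S n).m₁)) Filter.atTop ≤ R₁ ∧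
    Filter.limsup (fun n : ℕ => (1 / (n : ℝ)) * Real.log ((S n).m₂)) Filter.atTop ≤ R₂

/-- Entropy of a pmf (nats). -/
def pmfEnt {α : Type*} [Fintype α] (p : α → ℝ) : ℝ :=
  -∑ a, p a * Real.log (p a)

/-!
Converse (Stein). Whatever the messages, detector 1 decides through a function of `(Xⁿ, Y₁ⁿ)` and
detector 2 through a function of `(Xⁿ, Y₁ⁿ, Y₂ⁿ)`, so each runs an ordinary test between two
i.i.d. laws. Intersect its acceptance region with the set where the likelihood ratio is at most
`e^{n(D+δ)}`: by Chebyshev this set keeps null probability bounded away from `0`, and changing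
measure on it bounds the type-II error from below by `c e^{-n(D+δ)}`.

Achievability. With `R₁ ≥ H(X)` the sensor can index every typical `xⁿ` (there are at most
`e^{n(H(X)+δ)}` of them), and with `R₂ ≥ H(Y₁|X)` detector 1 can forward the index of every
conditionally typical `y₁ⁿ`. Both detectors then recover their whole observation except on an event
of vanishing probability, and accept `H` when the likelihood ratio is at least `e^{n(D-δ)}`.
-/

section IidProb

variable {γ : Type*} {p q : γ → ℝ} {n : ℕ} {E F : (Fin n → γ) → Prop}

theorem prod_apply_nonneg (hp : ∀ a, 0 ≤ p a) (z : Fin n → γ) : 0 ≤ ∏ t, p (z t) :=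
  Finset.prod_nonneg fun t _ => hp (z t)

variable [Fintype γ]

def iidProb (p : γ → ℝ) (n : ℕ) (E : (Fin n → γ) → Prop) : ℝ :=
  ∑ z, if E z then ∏ t, p (z t) else 0

theorem sum_prod_mul_prod (p : γ → ℝ) (h : Fin n → γ → ℝ) :
    ∑ z : Fin n → γ, (∏ t, p (z t)) * ∏ t, h t (z t) = ∏ t, ∑ a, p a * h t a := by
  simp_rw [← Finset.prod_mul_distrib]
  rw [Finset.prod_univ_sum (fun _ => univ) (fun t a => p a * h t a), Fintype.piFinset_univ]

theorem sum_prod_eq_one (hp1 : ∑ a, p a = 1) (n : ℕ) :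
    ∑ z : Fin n → γ, ∏ t, p (z t) = 1 := by
  simpa [hp1] using sum_prod_mul_prod (n := n) p (fun _ _ => 1)

theorem iidProb_nonneg (hp : ∀ a, 0 ≤ p a) : 0 ≤ iidProb p n E :=
  Finset.sum_nonneg fun z _ => by split_ifs; exacts [prod_apply_nonneg hp z, le_rfl]

theorem iidProb_mono_of_pos (hp : ∀ a, 0 ≤ p a) (h : ∀ z, 0 < ∏ t, p (z t) → E z → F z) :
    iidProb p n E ≤ iidProb p n F := by
  refine Finset.sum_le_sum fun z _ => ?_
  by_cases hE : E z
  · rcases (prod_apply_nonneg hp z).eq_or_lt with h0 | hpos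
    · simp [hE, ← h0]
    · simp [hE, h z hpos hE]
  · simp only [hE, if_false]; split_ifs; exacts [prod_apply_nonneg hp z, le_rfl]

theorem iidProb_mono (hp : ∀ a, 0 ≤ p a) (h : ∀ z, E z → F z) :
    iidProb p n E ≤ iidProb p n F :=
  iidProb_mono_of_pos hp fun z _ => h z

theorem iidProb_le_one (hp : ∀ a, 0 ≤ p a) (hp1 : ∑ a, p a = 1) : iidProb p n E ≤ 1 := by
  calc iidProb p n E ≤ iidProb p n fun _ => True := iidProb_mono hp fun _ _ => trivial
    _ = 1 := by simpa [iidProb] using sum_prod_eq_one hp1 n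

theorem iidProb_or_le (hp : ∀ a, 0 ≤ p a) :
    iidProb p n (fun z => E z ∨ F z) ≤ iidProb p n E + iidProb p n F := by
  rw [iidProb, iidProb, iidProb, ← Finset.sum_add_distrib]
  refine Finset.sum_le_sum fun z _ => ?_
  have hz := prod_apply_nonneg hp z
  split_ifs <;> simp_all

theorem iidProb_not (hp1 : ∑ a, p a = 1) :
    iidProb p n (fun z => ¬ E z) = 1 - iidProb p n E := by
  rw [eq_sub_iff_add_eq, iidProb, iidProb, ← Finset.sum_add_distrib, ← sum_prod_eq_one hp1 n]
  exact Finset.sum_congr rfl fun z _ => by split_ifs <;> simp_all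

theorem iidProb_le_mul {K : ℝ} (h : ∀ z, E z → ∏ t, p (z t) ≤ K * ∏ t, q (z t)) :
    iidProb p n E ≤ K * iidProb q n E := by
  rw [iidProb, iidProb, Finset.mul_sum]
  exact Finset.sum_le_sum fun z _ => by split_ifs with hE <;> simp [h z, hE]

theorem exists_of_iidProb_pos (h : 0 < iidProb p n E) : ∃ z, E z := by
  by_contra! hE
  simp [iidProb, hE] at h

theorem pow_le_iidProb {m : ℝ} (hm : 0 ≤ m) (hmp : ∀ a, m ≤ p a) {z : Fin n → γ} (hz : E z) :
    m ^ n ≤ iidProb p n E := by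
  have hp : ∀ a, 0 ≤ p a := fun a => hm.trans (hmp a)
  calc m ^ n = ∏ _t : Fin n, m := by simp
    _ ≤ ∏ t, p (z t) := Finset.prod_le_prod (fun _ _ => hm) fun t _ => hmp (z t)
    _ = if E z then ∏ t, p (z t) else 0 := by simp [hz]
    _ ≤ iidProb p n E :=
      Finset.single_le_sum (f := fun z => if E z then ∏ t, p (z t) else 0)
        (fun w _ => by split_ifs; exacts [prod_apply_nonneg hp w, le_rfl]) (mem_univ z)

theorem iidProb_comp {α : Type*} [Fintype α] (p : α → ℝ) (f : α → γ)
    (E : (Fin n → γ) → Prop) :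
    iidProb p n (fun z => E fun t => f (z t)) = iidProb (pdist p f) n E := by
  have hmass : ∀ w : Fin n → γ, ∏ t, pdist p f (w t)
      = ∑ z : Fin n → α with (fun t => f (z t)) = w, ∏ t, p (z t) := by
    intro w
    simp only [pdist]
    rw [Finset.prod_univ_sum (fun _ => univ) (fun t ω => if f ω = w t then p ω else 0),
      Fintype.piFinset_univ, Finset.sum_filter]
    simp only [Finset.prod_ite_zero, funext_iff, mem_univ, true_implies]
  rw [iidProb, iidProb, ← Finset.sum_fiberwise univ (fun z : Fin n → α => fun t => f (z t))]
  refine Finset.sum_congr rfl fun w _ => ?_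
  rw [hmass w]
  split_ifs with hE
  · exact Finset.sum_congr rfl fun z hz => by rw [(Finset.mem_filter.1 hz).2, if_pos hE]
  · exact Finset.sum_eq_zero fun z hz => by rw [(Finset.mem_filter.1 hz).2, if_neg hE]

end IidProb

section Concentration

variable {γ : Type*} [Fintype γ] {p u : γ → ℝ} {n : ℕ}

theorem sum_prod_mul_sq_sum (hp1 : ∑ a, p a = 1) {g : γ → ℝ} (hg : ∑ a, p a * g a = 0) :
    ∑ z : Fin n → γ, (∏ t, p (z t)) * (∑ t, g (z t)) ^ 2 = n * ∑ a, p a * g a ^ 2 := by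
  have hpair : ∀ t s : Fin n, ∑ z : Fin n → γ, (∏ j, p (z j)) * (g (z t) * g (z s))
      = if t = s then ∑ a, p a * g a ^ 2 else 0 := by
    intro t s
    -- `g (z t) * g (z s)` is a product of coordinate functions, so its mean factorizes
    have hfac : ∀ z : Fin n → γ, g (z t) * g (z s)
        = ∏ j, (if j = t then g (z j) else 1) * (if j = s then g (z j) else 1) := by
      intro z
      rw [Finset.prod_mul_distrib, Finset.prod_ite_eq', Finset.prod_ite_eq']
      simp
    simp_rw [hfac]
    rw [sum_prod_mul_prod p fun j a => (if j = t then g a else 1) * (if j = s then g a else 1)]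
    split_ifs with hts
    · subst hts
      have hj : ∀ j, ∑ a, p a * ((if j = t then g a else 1) * (if j = t then g a else 1))
          = if j = t then ∑ a, p a * g a ^ 2 else 1 := by
        intro j
        split_ifs <;> simp [sq, hp1]
      simp_rw [hj]
      simp
    · exact Finset.prod_eq_zero (mem_univ t) (by simp [hts, hg])
  calc ∑ z : Fin n → γ, (∏ t, p (z t)) * (∑ t, g (z t)) ^ 2
      = ∑ t, ∑ s, ∑ z : Fin n → γ, (∏ j, p (z j)) * (g (z t) * g (z s)) := by
        simp_rw [sq, Finset.sum_mul_sum, Finset.mul_sum]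
        rw [Finset.sum_comm]
        exact Finset.sum_congr rfl fun t _ => Finset.sum_comm
    _ = n * ∑ a, p a * g a ^ 2 := by simp [hpair]

theorem iidProb_abs_sum_sub_ge_le (hp : ∀ a, 0 ≤ p a) (hp1 : ∑ a, p a = 1) (g : γ → ℝ)
    {r : ℝ} (hr : 0 < r) :
    iidProb p n (fun z => r ≤ |∑ t, g (z t) - n * ∑ a, p a * g a|)
      ≤ n * (∑ a, p a * (g a - ∑ b, p b * g b) ^ 2) / r ^ 2 := by
  set μ := ∑ a, p a * g a
  have hcenter : ∑ a, p a * (g a - μ) = 0 := by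
    simp [mul_sub, Finset.sum_sub_distrib, ← Finset.sum_mul, hp1, μ]
  have hsum : ∀ z : Fin n → γ, ∑ t, g (z t) - n * μ = ∑ t, (g (z t) - μ) := by
    simp [Finset.sum_sub_distrib]
  rw [← sum_prod_mul_sq_sum hp1 hcenter, Finset.sum_div, iidProb]
  refine Finset.sum_le_sum fun z _ => ?_
  have hz := prod_apply_nonneg hp z
  rw [← hsum]
  split_ifs with h
  · rw [le_div_iff₀ (by positivity)]
    have : r ^ 2 ≤ (∑ t, g (z t) - n * μ) ^ 2 := by
      rw [← sq_abs (∑ t, g (z t) - n * μ)]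
      exact pow_le_pow_left₀ hr.le h 2
    nlinarith
  · positivity

def logMean (p u : γ → ℝ) : ℝ := ∑ a, p a * log (u a)

def logVar (p u : γ → ℝ) : ℝ := ∑ a, p a * (log (u a) - logMean p u) ^ 2

theorem logMean_div_self_eq_klD (p q : γ → ℝ) :
    logMean p (p / q) = klD p q := rfl

theorem pmfEnt_eq_neg_logMean (p : γ → ℝ) :
    pmfEnt p = -logMean p p := rfl

theorem iidProb_not_typical_le (hp : ∀ a, 0 ≤ p a) (hp1 : ∑ a, p a = 1)
    (hu : ∀ a, 0 < p a → 0 < u a) (hn : 0 < n) {δ : ℝ} (hδ : 0 < δ) :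
    iidProb p n (fun z => ¬ (exp (n * (logMean p u - δ)) ≤ ∏ t, u (z t) ∧
      ∏ t, u (z t) ≤ exp (n * (logMean p u + δ)))) ≤ logVar p u / (n * δ ^ 2) := by
  have hn' : (0 : ℝ) < n := Nat.cast_pos.2 hn
  calc _ ≤ iidProb p n (fun z => n * δ ≤ |∑ t, log (u (z t)) - n * logMean p u|) := by
        refine iidProb_mono_of_pos hp fun z hz hbad => ?_
        have hpos : ∀ t, 0 < u (z t) := fun t =>
          hu _ ((hp _).lt_of_ne (Finset.prod_ne_zero_iff.1 hz.ne' t (mem_univ t)).symm)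
        have hprod : ∏ t, u (z t) = exp (∑ t, log (u (z t))) := by
          rw [exp_sum]
          exact Finset.prod_congr rfl fun t _ => (exp_log (hpos t)).symm
        rw [hprod, exp_le_exp, exp_le_exp] at hbad
        by_contra! hlt
        rw [abs_lt] at hlt
        exact hbad ⟨by linarith, by linarith⟩
    _ ≤ n * logVar p u / (n * δ) ^ 2 :=
        iidProb_abs_sum_sub_ge_le hp hp1 (fun a => log (u a)) (by positivity)
    _ = logVar p u / (n * δ ^ 2) := by field_simp

end Concentration

theorem neg_one_div_mul_log_le_of_le {n : ℕ} (hn : 0 < n) {β c a : ℝ} (hc : 0 < c)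
    (h : c * exp (-(n * a)) ≤ β) : -(1 / (n : ℝ)) * log β ≤ a - log c / n := by
  have hn' : (0 : ℝ) < n := Nat.cast_pos.2 hn
  have hlog : log c - n * a ≤ log β := by
    have := log_le_log (by positivity) h
    rwa [log_mul hc.ne' (exp_pos _).ne', log_exp, ← sub_eq_add_neg] at this
  have := mul_le_mul_of_nonneg_left hlog (by positivity : (0 : ℝ) ≤ 1 / n)
  field_simp at this ⊢
  linarith

theorem le_neg_one_div_mul_log_of_le {n : ℕ} (hn : 0 < n) {β a : ℝ} (hβ : 0 < β)
    (h : β ≤ exp (-(n * a))) : a ≤ -(1 / (n : ℝ)) * log β := by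
  have hn' : (0 : ℝ) < n := Nat.cast_pos.2 hn
  have hlog : log β ≤ -(n * a) := by simpa using log_le_log hβ h
  have := mul_le_mul_of_nonneg_left hlog (by positivity : (0 : ℝ) ≤ 1 / n)
  field_simp at this ⊢
  linarith

theorem one_div_mul_log_le_of_le {n : ℕ} (hn : 0 < n) {x c a : ℝ} (hx : 0 < x) (hc : 0 < c)
    (h : x ≤ c * exp (n * a)) : 1 / (n : ℝ) * log x ≤ a + log c / n := by
  have hn' : (0 : ℝ) < n := Nat.cast_pos.2 hn
  have hlog : log x ≤ log c + n * a := by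
    have := log_le_log hx h
    rwa [log_mul hc.ne' (exp_pos _).ne', log_exp] at this
  have := mul_le_mul_of_nonneg_left hlog (by positivity : (0 : ℝ) ≤ 1 / n)
  field_simp at this ⊢
  linarith

theorem limsup_one_div_mul_log_le {m : ℕ → ℕ} {H : ℝ} {δ : ℕ → ℝ} (hH : 0 ≤ H)
    (hδ0 : ∀ n, 0 ≤ δ n) (hδ : Tendsto δ atTop (nhds 0)) (hm0 : ∀ n, 0 < m n)
    (hm : ∀ n, (m n : ℝ) ≤ exp (n * (H + δ n)) + 1) :
    limsup (fun n : ℕ => 1 / (n : ℝ) * log (m n)) atTop ≤ H := by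
  have hlog_nonneg : ∀ n : ℕ, 0 ≤ 1 / (n : ℝ) * log (m n) := fun n =>
    mul_nonneg (by positivity) (log_nonneg (Nat.one_le_cast.2 (hm0 n)))
  refine le_of_forall_pos_le_add fun η hη => limsup_le_of_le
    (isCoboundedUnder_le_of_eventually_le atTop (Eventually.of_forall hlog_nonneg)) ?_
  filter_upwards [hδ.eventually_lt_const (half_pos hη),
    (tendsto_const_div_atTop_nhds_zero_nat (log 2)).eventually_lt_const (half_pos hη),
    eventually_gt_atTop 0] with n hδn hlog2 hn
  have hle : (m n : ℝ) ≤ 2 * exp (n * (H + δ n)) := by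
    have := one_le_exp (mul_nonneg (Nat.cast_nonneg n) (add_nonneg hH (hδ0 n)))
    linarith [hm n]
  have := one_div_mul_log_le_of_le hn (Nat.cast_pos.2 (hm0 n)) two_pos hle
  linarith

section Testing

variable {γ : Type*} [Fintype γ] {p q : γ → ℝ}

theorem IsPMF.nonempty (hp : IsPMF p) : Nonempty γ := by
  by_contra h
  simpa [not_nonempty_iff.1 h] using hp.2

theorem exp_mul_le_iidProb (hp : IsPMF p) (hq : ∀ a, 0 < q a) {n : ℕ} (hn : 0 < n) {δ : ℝ}
    (hδ : 0 < δ) (A : (Fin n → γ) → Prop) :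
    exp (-(n * (klD p q + δ))) * (1 - iidProb p n (fun z => ¬ A z)
      - logVar p (fun a => p a / q a) / (n * δ ^ 2)) ≤ iidProb q n A := by
  set u : γ → ℝ := fun a => p a / q a
  have hD : logMean p u = klD p q := rfl
  set G : (Fin n → γ) → Prop := fun z => A z ∧ ∏ t, u (z t) ≤ exp (n * (klD p q + δ))
  have hG : 1 - iidProb p n (fun z => ¬ A z) - logVar p u / (n * δ ^ 2) ≤ iidProb p n G := by
    have hbad :=
      iidProb_not_typical_le hp.1 hp.2 (u := u) (fun a ha => div_pos ha (hq a)) hn hδ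
    have hnotG : iidProb p n (fun z => ¬ G z)
        ≤ iidProb p n (fun z => ¬ A z) + logVar p u / (n * δ ^ 2) := by
      refine (iidProb_mono hp.1 fun z hz => ?_).trans
        ((iidProb_or_le hp.1).trans (add_le_add le_rfl hbad))
      by_cases hA : A z
      · exact Or.inr fun h => hz ⟨hA, hD ▸ h.2⟩
      · exact Or.inl hA
    rw [iidProb_not hp.2] at hnotG
    linarith
  have hchange : iidProb p n G ≤ exp (n * (klD p q + δ)) * iidProb q n A := by
    refine (iidProb_le_mul fun z hz => ?_).trans
      (mul_le_mul_of_nonneg_left (iidProb_mono (fun a => (hq a).le) fun z hz => hz.1)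
        (exp_pos _).le)
    have h := hz.2
    rwa [Finset.prod_div_distrib, div_le_iff₀ (Finset.prod_pos fun t _ => hq (z t))] at h
  calc _ ≤ exp (-(n * (klD p q + δ))) * iidProb p n G :=
        mul_le_mul_of_nonneg_left hG (exp_pos _).le
    _ ≤ exp (-(n * (klD p q + δ))) * (exp (n * (klD p q + δ)) * iidProb q n A) :=
        mul_le_mul_of_nonneg_left hchange (exp_pos _).le
    _ = iidProb q n A := by rw [← mul_assoc, ← exp_add, neg_add_cancel, exp_zero, one_mul]

theorem le_klD_of_le_liminf (hp : IsPMF p) (hq : IsPMF q) (hq0 : ∀ a, 0 < q a) {ε θ : ℝ}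
    (hε : ε < 1) (ψ : ∀ n : ℕ, (Fin n → γ) → Bool)
    (hα : limsup (fun n => iidProb p n fun z => ψ n z = true) atTop ≤ ε)
    (hθ : θ ≤ liminf (fun n : ℕ => -(1 / (n : ℝ)) * log (iidProb q n fun z => ψ n z = false))
      atTop) :
    θ ≤ klD p q := by
  refine le_of_forall_pos_le_add fun η hη => hθ.trans ?_
  have hc₀ : 0 < (1 - ε) / 4 := by linarith
  have hα' : ∀ᶠ n in atTop, iidProb p n (fun z => ψ n z = true) < (1 + ε) / 2 :=
    eventually_lt_of_limsup_lt (by linarith)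
      (isBoundedUnder_of ⟨1, fun n => iidProb_le_one hp.1 hp.2⟩)
  have hV : ∀ᶠ n : ℕ in atTop,
      logVar p (fun a => p a / q a) / (n * (η / 2) ^ 2) < (1 - ε) / 4 :=
    (tendsto_const_nhds.div_atTop
      (tendsto_natCast_atTop_atTop.atTop_mul_const (by positivity))).eventually_lt_const hc₀
  have hlog : ∀ᶠ n : ℕ in atTop, -log ((1 - ε) / 4) / n < η / 2 :=
    (tendsto_const_div_atTop_nhds_zero_nat _).eventually_lt_const (half_pos hη)
  have hβ_nonneg : ∀ n : ℕ, 0 ≤ -(1 / (n : ℝ)) * log (iidProb q n fun z => ψ n z = false) :=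
    fun n => mul_nonneg_of_nonpos_of_nonpos (by simp)
      (log_nonpos (iidProb_nonneg hq.1) (iidProb_le_one hq.1 hq.2))
  refine liminf_le_of_frequently_le (Eventually.frequently ?_) (isBoundedUnder_of ⟨0, hβ_nonneg⟩)
  filter_upwards [hα', hV, hlog, eventually_gt_atTop 0] with n h1 h2 h3 hn
  have hβ := exp_mul_le_iidProb hp hq0 hn (half_pos hη) fun z => ψ n z = false
  simp only [Bool.not_eq_false] at hβ
  have hβ' : (1 - ε) / 4 * exp (-(n * (klD p q + η / 2)))
      ≤ iidProb q n fun z => ψ n z = false := by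
    refine le_trans ?_ hβ
    rw [mul_comm]
    exact mul_le_mul_of_nonneg_left (by linarith) (exp_pos _).le
  have := neg_one_div_mul_log_le_of_le hn hc₀ hβ'
  rw [neg_div] at h3
  linarith

theorem le_liminf_of_accept (hp : IsPMF p) (hq0 : ∀ a, 0 < q a) {D θ : ℝ} {δ : ℕ → ℝ}
    (hδ : Tendsto δ atTop (nhds 0)) (ψ : ∀ n : ℕ, (Fin n → γ) → Bool)
    (hα : Tendsto (fun n => iidProb p n fun z => ψ n z = true) atTop (nhds 0))
    (hacc : ∀ n z, ψ n z = false → exp (n * (D - δ n)) ≤ ∏ t, p (z t) / q (z t))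
    (hθ : θ ≤ D) :
    θ ≤ liminf (fun n : ℕ => -(1 / (n : ℝ)) * log (iidProb q n fun z => ψ n z = false))
      atTop := by
  obtain ⟨a₀, -, ha₀⟩ := Finset.exists_min_image univ q
    (Finset.univ_nonempty_iff.2 hp.nonempty)
  have hup : ∀ n : ℕ, (iidProb q n fun z => ψ n z = false) ≤ exp (-(n * (D - δ n))) := by
    intro n
    refine (iidProb_le_mul fun z hz => ?_).trans
      (mul_le_of_le_one_right (exp_pos _).le (iidProb_le_one hp.1 hp.2))
    have h := hacc n z hz
    rw [Finset.prod_div_distrib, le_div_iff₀ (Finset.prod_pos fun t _ => hq0 (z t))] at h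
    rw [exp_neg, ← div_eq_inv_mul, le_div_iff₀ (exp_pos _), mul_comm]
    exact h
  -- keeps the exponents bounded above, as a real `liminf` needs
  have hlow : ∀ᶠ n in atTop, q a₀ ^ n ≤ iidProb q n fun z => ψ n z = false := by
    filter_upwards [hα.eventually_lt_const one_pos] with n hn
    have hcompl := iidProb_not hp.2 (n := n) (E := fun z => ψ n z = true)
    simp only [Bool.not_eq_true] at hcompl
    obtain ⟨z, hz⟩ := exists_of_iidProb_pos (p := p) (by linarith)
    exact pow_le_iidProb (hq0 a₀).le (fun a => ha₀ a (mem_univ a)) hz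
  refine le_of_forall_pos_le_add fun η hη => hθ.trans (sub_le_iff_le_add.1 ?_)
  refine le_liminf_of_le (isCoboundedUnder_ge_of_eventually_le atTop (x := -log (q a₀)) ?_) ?_
  · filter_upwards [hlow, eventually_gt_atTop 0] with n h hn
    have hpow : 1 * exp (-(n * -log (q a₀))) ≤ iidProb q n fun z => ψ n z = false := by
      rwa [one_mul, mul_neg, neg_neg, exp_nat_mul, exp_log (hq0 a₀)]
    simpa using neg_one_div_mul_log_le_of_le hn one_pos hpow
  · filter_upwards [hlow, hδ.eventually_lt_const hη, eventually_gt_atTop 0] with n h hδn hn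
    have := le_neg_one_div_mul_log_of_le hn
      ((pow_pos (hq0 a₀) n).trans_le h) (hup n)
    linarith

end Testing

/-- Vanishing slack with `n δₙ² → ∞`, so that Chebyshev bounds `V / (n δₙ²)` still vanish. -/
def δseq (n : ℕ) : ℝ := (n : ℝ) ^ (-(1 / 4 : ℝ))

theorem δseq_nonneg (n : ℕ) : 0 ≤ δseq n := rpow_nonneg (Nat.cast_nonneg n) _

theorem tendsto_δseq : Tendsto δseq atTop (nhds 0) :=
  (tendsto_rpow_neg_atTop (by norm_num)).comp tendsto_natCast_atTop_atTop

theorem tendsto_mul_δseq_sq : Tendsto (fun n : ℕ => n * δseq n ^ 2) atTop atTop := by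
  have h : ∀ n : ℕ, (n : ℝ) * δseq n ^ 2 = (n : ℝ) ^ (1 / 2 : ℝ) := by
    intro n
    rcases n.eq_zero_or_pos with rfl | hn
    · simp
    · have hn' : (0 : ℝ) < n := Nat.cast_pos.2 hn
      rw [δseq, ← rpow_natCast, ← rpow_mul hn'.le]
      nth_rewrite 1 [← rpow_one (n : ℝ)]
      rw [← rpow_add hn']
      norm_num
  simp_rw [h]
  exact (tendsto_rpow_atTop (by norm_num)).comp tendsto_natCast_atTop_atTop

section Typical

variable {γ : Type*} [Fintype γ] {p u : γ → ℝ}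

/-- The empirical mean of `log u` along `z` is at least its `p`-mean minus `δ`. -/
def IsLowerTypical (p u : γ → ℝ) (δ : ℝ) {n : ℕ} (z : Fin n → γ) : Prop :=
  exp (n * (logMean p u - δ)) ≤ ∏ t, u (z t)

theorem tendsto_iidProb_not_isLowerTypical (hp : IsPMF p) (hu : ∀ a, 0 < p a → 0 < u a) :
    Tendsto (fun n => iidProb p n fun z => ¬ IsLowerTypical p u (δseq n) z) atTop (nhds 0) := by
  refine squeeze_zero' (Eventually.of_forall fun n => iidProb_nonneg hp.1) ?_
    ((tendsto_const_nhds (x := logVar p u)).div_atTop tendsto_mul_δseq_sq)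
  filter_upwards [eventually_gt_atTop 0] with n hn
  exact (iidProb_mono hp.1 fun z hz h => hz h.1).trans
    (iidProb_not_typical_le hp.1 hp.2 hu hn (rpow_pos_of_pos (Nat.cast_pos.2 hn) _))

theorem card_filter_le_prod_le_inv {β : Type*} [Fintype β] {n : ℕ} (f : Fin n → β → ℝ)
    (hf0 : ∀ t b, 0 ≤ f t b) (hf1 : ∀ t, ∑ b, f t b ≤ 1) {r : ℝ} (hr : 0 < r) :
    ((univ.filter fun y : Fin n → β => r ≤ ∏ t, f t (y t)).card : ℝ) ≤ r⁻¹ := by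
  set s := univ.filter fun y : Fin n → β => r ≤ ∏ t, f t (y t)
  have hmass : (s.card : ℝ) * r ≤ ∑ y ∈ s, ∏ t, f t (y t) := by
    simpa [nsmul_eq_mul] using Finset.card_nsmul_le_sum s _ r fun y hy => (mem_filter.1 hy).2
  have htotal : ∑ y ∈ s, ∏ t, f t (y t) ≤ ∑ y : Fin n → β, ∏ t, f t (y t) :=
    Finset.sum_le_sum_of_subset_of_nonneg (filter_subset _ _)
      fun y _ _ => Finset.prod_nonneg fun t _ => hf0 t (y t)
  have hone : ∑ y : Fin n → β, ∏ t, f t (y t) ≤ 1 := by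
    rw [← Fintype.piFinset_univ, ← Finset.prod_univ_sum]
    exact Finset.prod_le_one (fun t _ => Finset.sum_nonneg fun b _ => hf0 t b) fun t _ => hf1 t
  rw [← one_div, le_div_iff₀ hr]
  linarith

theorem card_filter_exp_le_prod_le {β : Type*} [Fintype β] {n : ℕ} {c δ : ℝ}
    (f : Fin n → β → ℝ) (hf0 : ∀ t b, 0 ≤ f t b) (hf1 : ∀ t, ∑ b, f t b ≤ 1) :
    ((univ.filter fun y : Fin n → β => exp (n * (c - δ)) ≤ ∏ t, f t (y t)).card : ℝ)
      ≤ exp (n * (-c + δ)) := by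
  convert card_filter_le_prod_le_inv f hf0 hf1 (exp_pos (n * (c - δ))) using 1
  rw [← exp_neg]
  ring_nf

end Typical

namespace Finset

variable {α : Type*}

def encodeFin (s : Finset α) (N : ℕ) (x : α) : Fin (N + 1) :=
  if h : x ∈ s then Fin.ofNat (N + 1) (s.equivFin ⟨x, h⟩) else Fin.last N

def decodeFin (s : Finset α) (N : ℕ) (i : Fin (N + 1)) : Option α :=
  if h : (i : ℕ) < s.card then some (s.equivFin.symm ⟨i, h⟩) else none

theorem decodeFin_encodeFin {s : Finset α} {N : ℕ} (hs : s.card ≤ N) (x : α) :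
    s.decodeFin N (s.encodeFin N x) = if x ∈ s then some x else none := by
  by_cases hx : x ∈ s
  · have hlt := (s.equivFin ⟨x, hx⟩).isLt
    have hmod : (s.equivFin ⟨x, hx⟩ : ℕ) % (N + 1) = s.equivFin ⟨x, hx⟩ :=
      Nat.mod_eq_of_lt (by omega)
    simp [encodeFin, decodeFin, hx, hmod]
  · simp [encodeFin, decodeFin, hx, hs]

end Finset

def Scheme.ofCodebooks {𝒳 𝒴₁ 𝒴₂ : Type*} [Fintype 𝒳] {n : ℕ} (T₁ : Finset (Fin n → 𝒳))
    (T₂ : (Fin n → 𝒳) → Finset (Fin n → 𝒴₁))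
    (A₁ : (Fin n → 𝒳) → (Fin n → 𝒴₁) → Prop)
    (A₂ : (Fin n → 𝒳) → (Fin n → 𝒴₁) → (Fin n → 𝒴₂) → Prop) : Scheme 𝒳 𝒴₁ 𝒴₂ n where
  m₁ := T₁.card + 1
  m₂ := univ.sup (fun x => (T₂ x).card) + 1
  φ₁ := T₁.encodeFin T₁.card
  φ₂ := fun (i, y) =>
    (T₁.decodeFin T₁.card i).elim (Fin.last _) fun x => (T₂ x).encodeFin _ y
  ψ₁ := fun (i, y) => decide (¬ ∃ x, T₁.decodeFin T₁.card i = some x ∧ A₁ x y)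
  ψ₂ := fun (i, j, y₂) => decide (¬ ∃ x y, T₁.decodeFin T₁.card i = some x ∧
    (T₂ x).decodeFin _ j = some y ∧ A₂ x y y₂)

theorem dec1_ofCodebooks_eq_false {𝒳 𝒴₁ 𝒴₂ : Type*} [Fintype 𝒳] {n : ℕ}
    {T₁ : Finset (Fin n → 𝒳)} {T₂ : (Fin n → 𝒳) → Finset (Fin n → 𝒴₁)}
    {A₁ : (Fin n → 𝒳) → (Fin n → 𝒴₁) → Prop}
    {A₂ : (Fin n → 𝒳) → (Fin n → 𝒴₁) → (Fin n → 𝒴₂) → Prop}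
    (x : Fin n → 𝒳) (y : Fin n → 𝒴₁) :
    dec1 (Scheme.ofCodebooks T₁ T₂ A₁ A₂) x y = false ↔ x ∈ T₁ ∧ A₁ x y := by
  simp [dec1, Scheme.ofCodebooks, Finset.decodeFin_encodeFin le_rfl]

theorem dec2_ofCodebooks_eq_false {𝒳 𝒴₁ 𝒴₂ : Type*} [Fintype 𝒳] {n : ℕ}
    {T₁ : Finset (Fin n → 𝒳)} {T₂ : (Fin n → 𝒳) → Finset (Fin n → 𝒴₁)}
    {A₁ : (Fin n → 𝒳) → (Fin n → 𝒴₁) → Prop}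
    {A₂ : (Fin n → 𝒳) → (Fin n → 𝒴₁) → (Fin n → 𝒴₂) → Prop}
    (x : Fin n → 𝒳) (y : Fin n → 𝒴₁) (y₂ : Fin n → 𝒴₂) :
    dec2 (Scheme.ofCodebooks T₁ T₂ A₁ A₂) x y y₂ = false ↔ x ∈ T₁ ∧ y ∈ T₂ x ∧ A₂ x y y₂ := by
  by_cases hx : x ∈ T₁
  · simp [dec2, Scheme.ofCodebooks, Finset.decodeFin_encodeFin le_rfl, hx,
      Finset.decodeFin_encodeFin (Finset.le_sup (f := fun x => (T₂ x).card) (mem_univ x))]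
  · simp [dec2, Scheme.ofCodebooks, Finset.decodeFin_encodeFin le_rfl, hx]

section Pushforward

variable {α β : Type*} [Fintype α] {p : α → ℝ}

theorem sum_mul_comp_eq_sum_pdist_mul (p : α → ℝ) (f : α → β) [Fintype β] (F : β → ℝ) :
    ∑ a, p a * F (f a) = ∑ b, pdist p f b * F b := by
  simp only [pdist, Finset.sum_mul, ite_mul, zero_mul]
  rw [Finset.sum_comm]
  simp

theorem IsPMF.pdist (hp : IsPMF p) (f : α → β) [Fintype β] : IsPMF (pdist p f) :=
  ⟨fun b => Finset.sum_nonneg fun a _ => by split_ifs; exacts [hp.1 a, le_rfl],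
    by simpa [hp.2] using (sum_mul_comp_eq_sum_pdist_mul p f fun _ => 1).symm⟩

theorem IsPMF.le_one [Fintype β] {q : β → ℝ} (hq : IsPMF q) (b : β) : q b ≤ 1 :=
  hq.2 ▸ Finset.single_le_sum (fun b _ => hq.1 b) (mem_univ b)

theorem pdist_fst_apply {γ : Type*} (p : β × γ → ℝ) [Fintype β] [Fintype γ] (b : β) :
    pdist p Prod.fst b = ∑ c, p (b, c) := by
  simp only [pdist, Fintype.sum_prod_type]
  rw [Finset.sum_comm]
  simp

theorem le_pdist_fst {γ : Type*} [Fintype β] [Fintype γ] {p : β × γ → ℝ} (hp : ∀ x, 0 ≤ p x)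
    (b : β) (c : γ) : p (b, c) ≤ pdist p Prod.fst b := by
  rw [pdist_fst_apply]
  exact Finset.single_le_sum (f := fun c => p (b, c)) (fun c _ => hp _) (mem_univ c)

theorem logMean_nonpos {q u : β → ℝ} [Fintype β] (hq : ∀ b, 0 ≤ q b) (hu0 : ∀ b, 0 ≤ u b)
    (hu1 : ∀ b, u b ≤ 1) : logMean q u ≤ 0 :=
  Finset.sum_nonpos fun b _ =>
    mul_nonpos_of_nonneg_of_nonpos (hq b) (log_nonpos (hu0 b) (hu1 b))

end Pushforward

section Marginals

variable (P : 𝒳 × 𝒴₁ × 𝒴₂ → ℝ)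

def margXY : 𝒳 × 𝒴₁ → ℝ := pdist P fun e => (e.1, e.2.1)

-- a marginal of `margXY P`, so that `iidProb_comp` chains through both projections by `rfl`
def margX : 𝒳 → ℝ := pdist (margXY P) Prod.fst

def condY₁ (d : 𝒳 × 𝒴₁) : ℝ := margXY P d / margX P d.1

theorem margXY_eq : margXY P = fun d => ∑ c, P (d.1, d.2, c) := by
  ext ⟨a, b⟩
  simp only [margXY, pdist, Prod.mk.injEq, ite_and, Fintype.sum_prod_type, sum_ite_irrel,
    sum_const_zero, sum_ite_eq', mem_univ, ↓reduceIte]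
  rw [Finset.sum_comm]
  simp

theorem margX_eq : margX P = fun a => ∑ b, ∑ c, P (a, b, c) := by
  ext a
  simp [margX, pdist_fst_apply, margXY_eq]

variable {P}

theorem margXY_pos (hP : ∀ e, 0 < P e) [Nonempty 𝒴₂] (d : 𝒳 × 𝒴₁) : 0 < margXY P d := by
  rw [margXY_eq]
  exact Finset.sum_pos (fun c _ => hP _) univ_nonempty

theorem sum_condY₁_le_one (a : 𝒳) : ∑ b, condY₁ P (a, b) ≤ 1 := by
  simp only [condY₁]
  rw [← Finset.sum_div, margX, pdist_fst_apply]
  exact div_self_le_one _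

theorem IsPMF.margXY (hP : IsPMF P) : IsPMF (margXY P) := hP.pdist _

theorem IsPMF.margX (hP : IsPMF P) : IsPMF (margX P) := hP.margXY.pdist _

theorem margXY_le_margX (hP : IsPMF P) (d : 𝒳 × 𝒴₁) : margXY P d ≤ margX P d.1 :=
  le_pdist_fst hP.margXY.1 d.1 d.2

theorem condY₁_nonneg (hP : IsPMF P) (d : 𝒳 × 𝒴₁) : 0 ≤ condY₁ P d :=
  div_nonneg (hP.margXY.1 d) (hP.margX.1 d.1)

theorem condY₁_le_one (hP : IsPMF P) (d : 𝒳 × 𝒴₁) : condY₁ P d ≤ 1 :=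
  div_le_one_of_le₀ (margXY_le_margX hP d) (hP.margX.1 d.1)

theorem condY₁_pos (hP : IsPMF P) (d : 𝒳 × 𝒴₁) (hd : 0 < margXY P d) : 0 < condY₁ P d :=
  div_pos hd (hd.trans_le (margXY_le_margX hP d))

theorem logMean_condY₁ (hP : IsPMF P) :
    logMean (margXY P) (condY₁ P) = pmfEnt (margX P) - pmfEnt (margXY P) := by
  have hterm : ∀ d, margXY P d * log (condY₁ P d)
      = margXY P d * log (margXY P d) - margXY P d * log (margX P d.1) := by
    intro d
    rcases (hP.margXY.1 d).eq_or_lt with h0 | hpos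
    · simp [← h0]
    · rw [condY₁, log_div hpos.ne' (hpos.trans_le (margXY_le_margX hP d)).ne', mul_sub]
  rw [logMean, Finset.sum_congr rfl fun d _ => hterm d, Finset.sum_sub_distrib,
    sum_mul_comp_eq_sum_pdist_mul (margXY P) Prod.fst fun a => log (margX P a)]
  simp only [pmfEnt, margX]
  ring

end Marginals

theorem prn_eq_iidProb (p : 𝒳 × 𝒴₁ × 𝒴₂ → ℝ) {n : ℕ}
    (E : (Fin n → 𝒳) → (Fin n → 𝒴₁) → (Fin n → 𝒴₂) → Prop) :
    prn p n E = iidProb p n fun z =>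
      E (fun t => (z t).1) (fun t => (z t).2.1) (fun t => (z t).2.2) := by
  let e : (Fin n → 𝒳 × 𝒴₁ × 𝒴₂) ≃ (Fin n → 𝒳) × (Fin n → 𝒴₁) × (Fin n → 𝒴₂) :=
    (Equiv.arrowProdEquivProdArrow _ _ _).trans
      ((Equiv.refl _).prodCongr (Equiv.arrowProdEquivProdArrow _ _ _))
  rw [prn, iidProb, Fintype.sum_equiv e
    (fun z => if E (fun t => (z t).1) (fun t => (z t).2.1) (fun t => (z t).2.2)
      then ∏ t, p (z t) else 0)
    (fun w => if E w.1 w.2.1 w.2.2 then ∏ t, p (w.1 t, w.2.1 t, w.2.2 t) else 0) fun z => rfl]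
  simp only [Fintype.sum_prod_type]

theorem prn_eq_iidProb_margXY (p : 𝒳 × 𝒴₁ × 𝒴₂ → ℝ) {n : ℕ}
    (E : (Fin n → 𝒳) → (Fin n → 𝒴₁) → Prop) :
    prn p n (fun x y _ => E x y)
      = iidProb (margXY p) n fun w => E (fun t => (w t).1) (fun t => (w t).2) :=
  (prn_eq_iidProb p _).trans <| iidProb_comp p (fun e => (e.1, e.2.1))
    fun w : Fin n → 𝒳 × 𝒴₁ => E (fun t => (w t).1) (fun t => (w t).2)

section Errors

variable (P : 𝒳 × 𝒴₁ × 𝒴₂ → ℝ) {n : ℕ} (S : Scheme 𝒳 𝒴₁ 𝒴₂ n)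

theorem α1_eq_iidProb :
    α1 P S = iidProb (margXY P) n fun w =>
      dec1 S (fun t => (w t).1) (fun t => (w t).2) = true :=
  prn_eq_iidProb_margXY P _

theorem β1_eq_iidProb :
    β1 P S = iidProb (margXY P) n fun w =>
      dec1 S (fun t => (w t).1) (fun t => (w t).2) = false :=
  prn_eq_iidProb_margXY P _

theorem α2_eq_iidProb :
    α2 P S = iidProb P n fun z =>
      dec2 S (fun t => (z t).1) (fun t => (z t).2.1) (fun t => (z t).2.2) = true :=
  prn_eq_iidProb P _

theorem β2_eq_iidProb :
    β2 P S = iidProb P n fun z =>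
      dec2 S (fun t => (z t).1) (fun t => (z t).2.1) (fun t => (z t).2.2) = false :=
  prn_eq_iidProb P _

end Errors

theorem Achievable.le_klD {P Pb : 𝒳 × 𝒴₁ × 𝒴₂ → ℝ} {R₁ R₂ ε₁ ε₂ θ₁ θ₂ : ℝ}
    (h : Achievable P Pb R₁ R₂ ε₁ ε₂ θ₁ θ₂) (hP : IsPMF P) (hPb : IsPMF Pb)
    (hpos : ∀ a, 0 < Pb a) (hε₁ : ε₁ < 1) (hε₂ : ε₂ < 1) :
    θ₁ ≤ klD (margXY P) (margXY Pb) ∧ θ₂ ≤ klD P Pb := by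
  obtain ⟨S, hα₁, hα₂, hβ₁, hβ₂, -, -⟩ := h
  have : Nonempty 𝒴₂ := hP.nonempty.map fun e => e.2.2
  simp only [α1_eq_iidProb, β1_eq_iidProb, α2_eq_iidProb, β2_eq_iidProb] at hα₁ hβ₁ hα₂ hβ₂
  exact ⟨le_klD_of_le_liminf hP.margXY hPb.margXY (margXY_pos hpos) hε₁ _ hα₁ hβ₁,
    le_klD_of_le_liminf hP hPb hpos hε₂ _ hα₂ hβ₂⟩

def typicalScheme (P Pb : 𝒳 × 𝒴₁ × 𝒴₂ → ℝ) (n : ℕ) : Scheme 𝒳 𝒴₁ 𝒴₂ n :=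
  Scheme.ofCodebooks (univ.filter (IsLowerTypical (margX P) (margX P) (δseq n)))
    (fun x => univ.filter fun y =>
      IsLowerTypical (margXY P) (condY₁ P) (δseq n) fun t => (x t, y t))
    (fun x y => IsLowerTypical (margXY P) (margXY P / margXY Pb) (δseq n) fun t => (x t, y t))
    (fun x y y₂ => IsLowerTypical P (P / Pb) (δseq n) fun t => (x t, y t, y₂ t))

section TypicalScheme

variable {P Pb : 𝒳 × 𝒴₁ × 𝒴₂ → ℝ}

theorem tendsto_α1_typicalScheme (hP : IsPMF P) (hpos : ∀ a, 0 < Pb a) :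
    Tendsto (fun n => α1 P (typicalScheme P Pb n)) atTop (nhds 0) := by
  have : Nonempty 𝒴₂ := hP.nonempty.map fun e => e.2.2
  have hX := tendsto_iidProb_not_isLowerTypical hP.margX (u := margX P) fun _ ha => ha
  have hXY := tendsto_iidProb_not_isLowerTypical hP.margXY (u := margXY P / margXY Pb)
    fun d hd => div_pos hd (margXY_pos hpos d)
  refine squeeze_zero (fun n => by rw [α1_eq_iidProb]; exact iidProb_nonneg hP.margXY.1)
    (fun n => ?_) (by simpa using hX.add hXY)
  calc α1 P (typicalScheme P Pb n)
      ≤ iidProb (margXY P) n (fun w => ¬ IsLowerTypical (margX P) (margX P) (δseq n)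
          fun t => (w t).1)
        + iidProb (margXY P) n (fun w => ¬ IsLowerTypical (margXY P) (margXY P / margXY Pb)
          (δseq n) w) := by
        rw [α1_eq_iidProb]
        refine (iidProb_mono hP.margXY.1 fun w hw => ?_).trans (iidProb_or_le hP.margXY.1)
        rw [← Bool.not_eq_false, typicalScheme, dec1_ofCodebooks_eq_false] at hw
        simp only [mem_filter, mem_univ, true_and, Prod.mk.eta] at hw
        tauto
    _ = _ := by
      rw [iidProb_comp (margXY P) Prod.fst fun x => ¬ IsLowerTypical (margX P) (margX P) (δseq n) x]
      rfl

theorem tendsto_α2_typicalScheme (hP : IsPMF P) (hpos : ∀ a, 0 < Pb a) :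
    Tendsto (fun n => α2 P (typicalScheme P Pb n)) atTop (nhds 0) := by
  have hX := tendsto_iidProb_not_isLowerTypical hP.margX (u := margX P) fun _ ha => ha
  have hY := tendsto_iidProb_not_isLowerTypical hP.margXY (u := condY₁ P) (condY₁_pos hP)
  have hXYZ := tendsto_iidProb_not_isLowerTypical hP (u := P / Pb)
    fun e he => div_pos he (hpos e)
  refine squeeze_zero (fun n => by rw [α2_eq_iidProb]; exact iidProb_nonneg hP.1)
    (fun n => ?_) (by simpa using hX.add (hY.add hXYZ))
  calc α2 P (typicalScheme P Pb n)
      ≤ iidProb P n (fun z => ¬ IsLowerTypical (margX P) (margX P) (δseq n) fun t => (z t).1)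
        + (iidProb P n (fun z => ¬ IsLowerTypical (margXY P) (condY₁ P) (δseq n)
            fun t => ((z t).1, (z t).2.1))
          + iidProb P n (fun z => ¬ IsLowerTypical P (P / Pb) (δseq n) z)) := by
        rw [α2_eq_iidProb]
        refine (iidProb_mono hP.1 fun z hz => ?_).trans ((iidProb_or_le hP.1).trans
          (add_le_add le_rfl (iidProb_or_le hP.1)))
        rw [← Bool.not_eq_false, typicalScheme, dec2_ofCodebooks_eq_false] at hz
        simp only [mem_filter, mem_univ, true_and] at hz
        tauto
    _ = _ := by
      rw [iidProb_comp P (fun e => (e.1, e.2.1))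
          fun w => ¬ IsLowerTypical (margXY P) (condY₁ P) (δseq n) w,
        iidProb_comp P (fun e => (e.1, e.2.1))
          fun w => ¬ IsLowerTypical (margX P) (margX P) (δseq n) fun t => (w t).1]
      rw [← margXY,
        iidProb_comp (margXY P) Prod.fst fun x => ¬ IsLowerTypical (margX P) (margX P) (δseq n) x]
      rfl

theorem le_liminf_β1_typicalScheme (hP : IsPMF P) (hpos : ∀ a, 0 < Pb a) {θ : ℝ}
    (hθ : θ ≤ klD (margXY P) (margXY Pb)) :
    θ ≤ liminf (fun n : ℕ => -(1 / (n : ℝ)) * log (β1 Pb (typicalScheme P Pb n))) atTop := by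
  have : Nonempty 𝒴₂ := hP.nonempty.map fun e => e.2.2
  simp only [β1_eq_iidProb]
  refine le_liminf_of_accept hP.margXY (margXY_pos hpos) tendsto_δseq _ ?_ (fun n w hw => ?_) hθ
  · simpa only [α1_eq_iidProb] using tendsto_α1_typicalScheme (Pb := Pb) hP hpos
  · rw [typicalScheme, dec1_ofCodebooks_eq_false] at hw
    simpa [IsLowerTypical, logMean_div_self_eq_klD] using hw.2

theorem le_liminf_β2_typicalScheme (hP : IsPMF P) (hpos : ∀ a, 0 < Pb a) {θ : ℝ}
    (hθ : θ ≤ klD P Pb) :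
    θ ≤ liminf (fun n : ℕ => -(1 / (n : ℝ)) * log (β2 Pb (typicalScheme P Pb n))) atTop := by
  simp only [β2_eq_iidProb]
  refine le_liminf_of_accept hP hpos tendsto_δseq _ ?_ (fun n z hz => ?_) hθ
  · simpa only [α2_eq_iidProb] using tendsto_α2_typicalScheme (Pb := Pb) hP hpos
  · rw [typicalScheme, dec2_ofCodebooks_eq_false] at hz
    simpa [IsLowerTypical, logMean_div_self_eq_klD] using hz.2.2

theorem limsup_rate₁_typicalScheme (hP : IsPMF P) :
    limsup (fun n : ℕ => 1 / (n : ℝ) * log ((typicalScheme P Pb n).m₁)) atTop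
      ≤ pmfEnt (margX P) := by
  rw [pmfEnt_eq_neg_logMean]
  refine limsup_one_div_mul_log_le
    (neg_nonneg.2 (logMean_nonpos hP.margX.1 hP.margX.1 hP.margX.le_one))
    δseq_nonneg tendsto_δseq (fun n => Nat.succ_pos _) fun n => ?_
  have hcard := card_filter_exp_le_prod_le (n := n) (c := logMean (margX P) (margX P))
    (δ := δseq n) (fun _ => margX P) (fun _ => hP.margX.1) fun _ => hP.margX.2.le
  simp only [typicalScheme, Scheme.ofCodebooks, Nat.cast_add, Nat.cast_one]
  exact add_le_add hcard le_rfl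

theorem limsup_rate₂_typicalScheme (hP : IsPMF P) :
    limsup (fun n : ℕ => 1 / (n : ℝ) * log ((typicalScheme P Pb n).m₂)) atTop
      ≤ pmfEnt (margXY P) - pmfEnt (margX P) := by
  rw [← neg_sub, ← logMean_condY₁ hP]
  refine limsup_one_div_mul_log_le
    (neg_nonneg.2 (logMean_nonpos hP.margXY.1 (condY₁_nonneg hP) (condY₁_le_one hP)))
    δseq_nonneg tendsto_δseq (fun n => Nat.succ_pos _) fun n => ?_
  set B := exp (n * (-logMean (margXY P) (condY₁ P) + δseq n))
  have hcard : ∀ x : Fin n → 𝒳, ((univ.filter fun y : Fin n → 𝒴₁ =>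
      IsLowerTypical (margXY P) (condY₁ P) (δseq n) fun t => (x t, y t)).card : ℝ) ≤ B :=
    fun x => card_filter_exp_le_prod_le (fun t b => condY₁ P (x t, b))
      (fun _ _ => condY₁_nonneg hP _) fun t => sum_condY₁_le_one (x t)
  have hsup : ((univ.sup fun x : Fin n → 𝒳 => (univ.filter fun y : Fin n → 𝒴₁ =>
      IsLowerTypical (margXY P) (condY₁ P) (δseq n) fun t => (x t, y t)).card : ℕ) : ℝ) ≤ B :=
    (Nat.cast_le.2 (Finset.sup_le fun x _ => Nat.le_floor (hcard x))).trans
      (Nat.floor_le (exp_pos _).le)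
  simp only [typicalScheme, Scheme.ofCodebooks, Nat.cast_add, Nat.cast_one]
  exact add_le_add hsup le_rfl

end TypicalScheme

theorem achievable_of_le_klD {P Pb : 𝒳 × 𝒴₁ × 𝒴₂ → ℝ} {R₁ R₂ ε₁ ε₂ θ₁ θ₂ : ℝ}
    (hP : IsPMF P) (hpos : ∀ a, 0 < Pb a) (hR₁ : pmfEnt (margX P) ≤ R₁)
    (hR₂ : pmfEnt (margXY P) - pmfEnt (margX P) ≤ R₂) (hε₁ : 0 ≤ ε₁) (hε₂ : 0 ≤ ε₂)
    (hθ₁ : θ₁ ≤ klD (margXY P) (margXY Pb)) (hθ₂ : θ₂ ≤ klD P Pb) :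
    Achievable P Pb R₁ R₂ ε₁ ε₂ θ₁ θ₂ :=
  ⟨typicalScheme P Pb, (tendsto_α1_typicalScheme hP hpos).limsup_eq.trans_le hε₁,
    (tendsto_α2_typicalScheme hP hpos).limsup_eq.trans_le hε₂,
    le_liminf_β1_typicalScheme hP hpos hθ₁, le_liminf_β2_typicalScheme hP hpos hθ₂,
    (limsup_rate₁_typicalScheme hP).trans hR₁, (limsup_rate₂_typicalScheme hP).trans hR₂⟩

theorem stmt_10_general {𝒳 𝒴₁ 𝒴₂ : Type*} [Fintype 𝒳] [Fintype 𝒴₁] [Fintype 𝒴₂]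
    (P Pb : 𝒳 × 𝒴₁ × 𝒴₂ → ℝ) (hP : IsPMF P) (hPb : IsPMF Pb) (hpos : ∀ a, 0 < Pb a)
    (R₁ R₂ : ℝ)
    (hR₁ : R₁ ≥ pmfEnt (fun x : 𝒳 => ∑ y1, ∑ y2, P (x, y1, y2)))
    (hR₂ : R₂ ≥ pmfEnt (fun xy : 𝒳 × 𝒴₁ => ∑ y2, P (xy.1, xy.2, y2))
        - pmfEnt (fun x : 𝒳 => ∑ y1, ∑ y2, P (x, y1, y2)))
    (ε₁ ε₂ : ℝ) (hε₁ : ε₁ ∈ Set.Ioo (0:ℝ) 1) (hε₂ : ε₂ ∈ Set.Ioo (0:ℝ) 1)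
    (θ₁ θ₂ : ℝ) :
    Achievable P Pb R₁ R₂ ε₁ ε₂ θ₁ θ₂
      ↔ (θ₁ ≤ klD (fun xy : 𝒳 × 𝒴₁ => ∑ y2, P (xy.1, xy.2, y2))
              (fun xy : 𝒳 × 𝒴₁ => ∑ y2, Pb (xy.1, xy.2, y2))
          ∧ θ₂ ≤ klD P Pb) := by
  rw [← margX_eq] at hR₁ hR₂
  rw [← margXY_eq] at hR₂
  rw [← margXY_eq, ← margXY_eq]
  exact ⟨fun h => h.le_klD hP hPb hpos hε₁.2 hε₂.2,
    fun h => achievable_of_le_klD hP hpos hR₁ hR₂ hε₁.1.le hε₂.1.le h.1 h.2⟩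

/-- If `R₁ ≥ H(X)` and `R₂ ≥ H(Y₁|X)`, the error-exponents region
is exactly `{(θ₁,θ₂) : 0 ≤ θ₁ ≤ D(P_{XY₁}‖P̄_{XY₁}), 0 ≤ θ₂ ≤ D(P‖P̄)}`
(rates and exponents in nats). -/
theorem stmt_10 {𝒳 𝒴₁ 𝒴₂ : Type*} [Fintype 𝒳] [Fintype 𝒴₁] [Fintype 𝒴₂]
    (P Pb : 𝒳 × 𝒴₁ × 𝒴₂ → ℝ) (hP : IsPMF P) (hPb : IsPMF Pb) (hpos : ∀ a, 0 < Pb a)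
    (R₁ R₂ : ℝ)
    (hR₁ : R₁ ≥ pmfEnt (fun x : 𝒳 => ∑ y1, ∑ y2, P (x, y1, y2)))
    (hR₂ : R₂ ≥ pmfEnt (fun xy : 𝒳 × 𝒴₁ => ∑ y2, P (xy.1, xy.2, y2))
        - pmfEnt (fun x : 𝒳 => ∑ y1, ∑ y2, P (x, y1, y2)))
    (ε₁ ε₂ : ℝ) (hε₁ : ε₁ ∈ Set.Ioo (0:ℝ) 1) (hε₂ : ε₂ ∈ Set.Ioo (0:ℝ) 1)
    (θ₁ θ₂ : ℝ) (hθ₁ : 0 ≤ θ₁) (hθ₂ : 0 ≤ θ₂) :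
    Achievable P Pb R₁ R₂ ε₁ ε₂ θ₁ θ₂
      ↔ (θ₁ ≤ klD (fun xy : 𝒳 × 𝒴₁ => ∑ y2, P (xy.1, xy.2, y2))
              (fun xy : 𝒳 × 𝒴₁ => ∑ y2, Pb (xy.1, xy.2, y2))
          ∧ θ₂ ≤ klD P Pb) :=
  stmt_10_general P Pb hP hPb hpos R₁ R₂ hR₁ hR₂ ε₁ ε₂ hε₁ hε₂ θ₁ θ₂
end
end
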